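/- For every ψ ∈ L with lookahead at most 1 and every trace τ: the DFA D_{ψ_back} accepts a word consistent with τ if and only if the NFA N_{ψ_back} accepts a word consistent with τ. -/

import Mathlib

namespace ALTLf

/-- Sorts of variables: integers or rationals. -/
inductive VSort where
  | int : VSort
  | rat : VSort
  deriving DecidableEq

/-- Domain of each sort. -/
def Dom : VSort → Type
  | .int => ℤ
  | .rat => ℚ

instance instDomRing : (s : VSort) → CommRing (Dom s)
  | .int => inferInstanceAs (CommRing ℤ)
  | .rat => inferInstanceAs (CommRing ℚ)

instance instDomLinearOrder : (s : VSort) → LinearOrder (Dom s)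
  | .int => inferInstanceAs (LinearOrder ℤ)
  | .rat => inferInstanceAs (LinearOrder ℚ)

instance instDomIsStrictOrderedRing : (s : VSort) → IsStrictOrderedRing (Dom s)
  | .int => inferInstanceAs (IsStrictOrderedRing ℤ)
  | .rat => inferInstanceAs (IsStrictOrderedRing ℚ)

instance (s : VSort) : Inhabited (Dom s) := ⟨0⟩

/-- Arithmetic expressions over variables with lookahead/lookback offset `j : ℤ`
(`(v, j)` refers to the value of `v`, `j` instants ahead; negative `j` is lookback,
used for the `pre`-variables: `v_cur = (v,0)`, `v_pre = (v,-1)`). -/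
inductive Expr (V : Type) (sortOf : V → VSort) : VSort → Type where
  | var (v : V) (j : ℤ) : Expr V sortOf (sortOf v)
  | const {s : VSort} (k : Dom s) : Expr V sortOf s
  | add {s : VSort} (e₁ e₂ : Expr V sortOf s) : Expr V sortOf s
  | smul {s : VSort} (k : Dom s) (e : Expr V sortOf s) : Expr V sortOf s

namespace Expr

variable {V : Type} {sortOf : V → VSort}

def eval (σ : (v : V) → ℤ → Dom (sortOf v)) : {s : VSort} → Expr V sortOf s → Dom s
  | _, .var v j => σ v j
  | _, .const k => k
  | _, .add e₁ e₂ => eval σ e₁ + eval σ e₂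
  | _, .smul k e => k * eval σ e

def HasVar : {s : VSort} → Expr V sortOf s → V → ℤ → Prop
  | _, .var v j, w, i => v = w ∧ j = i
  | _, .const _, _, _ => False
  | _, .add e₁ e₂, w, i => HasVar e₁ w i ∨ HasVar e₂ w i
  | _, .smul _ e, w, i => HasVar e w i

def shift (d : ℤ) : {s : VSort} → Expr V sortOf s → Expr V sortOf s
  | _, .var v j => .var v (j + d)
  | _, .const k => .const k
  | _, .add e₁ e₂ => .add (shift d e₁) (shift d e₂)
  | _, .smul k e => .smul k (shift d e)

def hasLook : {s : VSort} → Expr V sortOf s → Bool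
  | _, .var _ j => j != 0
  | _, .const _ => false
  | _, .add e₁ e₂ => hasLook e₁ || hasLook e₂
  | _, .smul _ e => hasLook e

def isVar : {s : VSort} → Expr V sortOf s → Prop
  | _, .var _ _ => True
  | _, _ => False

end Expr

/-- Arithmetic constraints: comparisons of expressions of equal sort, and
(non-)congruence modulo `n` for integer expressions. -/
inductive Constraint (V : Type) (sortOf : V → VSort) where
  | eq {s : VSort} (e₁ e₂ : Expr V sortOf s)
  | ne {s : VSort} (e₁ e₂ : Expr V sortOf s)
  | lt {s : VSort} (e₁ e₂ : Expr V sortOf s)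
  | le {s : VSort} (e₁ e₂ : Expr V sortOf s)
  | cong (n : ℕ) (e₁ e₂ : Expr V sortOf .int)
  | ncong (n : ℕ) (e₁ e₂ : Expr V sortOf .int)

namespace Constraint

variable {V : Type} {sortOf : V → VSort}

def holds (σ : (v : V) → ℤ → Dom (sortOf v)) : Constraint V sortOf → Prop
  | .eq e₁ e₂ => e₁.eval σ = e₂.eval σ
  | .ne e₁ e₂ => e₁.eval σ ≠ e₂.eval σ
  | .lt e₁ e₂ => e₁.eval σ < e₂.eval σ
  | .le e₁ e₂ => e₁.eval σ ≤ e₂.eval σ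
  | .cong n e₁ e₂ => (n : Dom .int) ∣ (e₁.eval σ - e₂.eval σ)
  | .ncong n e₁ e₂ => ¬ ((n : Dom .int) ∣ (e₁.eval σ - e₂.eval σ))

def HasVar : Constraint V sortOf → V → ℤ → Prop
  | .eq e₁ e₂, w, i => e₁.HasVar w i ∨ e₂.HasVar w i
  | .ne e₁ e₂, w, i => e₁.HasVar w i ∨ e₂.HasVar w i
  | .lt e₁ e₂, w, i => e₁.HasVar w i ∨ e₂.HasVar w i
  | .le e₁ e₂, w, i => e₁.HasVar w i ∨ e₂.HasVar w i
  | .cong _ e₁ e₂, w, i => e₁.HasVar w i ∨ e₂.HasVar w i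
  | .ncong _ e₁ e₂, w, i => e₁.HasVar w i ∨ e₂.HasVar w i

/-- `neg c` flips the comparison operator of `c`. -/
def neg : Constraint V sortOf → Constraint V sortOf
  | .eq e₁ e₂ => .ne e₁ e₂
  | .ne e₁ e₂ => .eq e₁ e₂
  | .lt e₁ e₂ => .le e₂ e₁
  | .le e₁ e₂ => .lt e₂ e₁
  | .cong n e₁ e₂ => .ncong n e₁ e₂
  | .ncong n e₁ e₂ => .cong n e₁ e₂

def shift (d : ℤ) : Constraint V sortOf → Constraint V sortOf
  | .eq e₁ e₂ => .eq (e₁.shift d) (e₂.shift d)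
  | .ne e₁ e₂ => .ne (e₁.shift d) (e₂.shift d)
  | .lt e₁ e₂ => .lt (e₁.shift d) (e₂.shift d)
  | .le e₁ e₂ => .le (e₁.shift d) (e₂.shift d)
  | .cong n e₁ e₂ => .cong n (e₁.shift d) (e₂.shift d)
  | .ncong n e₁ e₂ => .ncong n (e₁.shift d) (e₂.shift d)

def hasLook : Constraint V sortOf → Bool
  | .eq e₁ e₂ => e₁.hasLook || e₂.hasLook
  | .ne e₁ e₂ => e₁.hasLook || e₂.hasLook
  | .lt e₁ e₂ => e₁.hasLook || e₂.hasLook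
  | .le e₁ e₂ => e₁.hasLook || e₂.hasLook
  | .cong _ e₁ e₂ => e₁.hasLook || e₂.hasLook
  | .ncong _ e₁ e₂ => e₁.hasLook || e₂.hasLook

end Constraint

/-- `c` mentions a `pre` (lookback) variable. -/
def MentionsPre {V : Type} {sortOf : V → VSort} (c : Constraint V sortOf) : Prop :=
  ∃ v j, j < 0 ∧ c.HasVar v j

/-- `c` mentions only current variables (offset `0`). -/
def OnlyCur {V : Type} {sortOf : V → VSort} (c : Constraint V sortOf) : Prop :=
  ∀ v j, c.HasVar v j → j = 0

/-- `c` is over `V_pre ∪ V_cur` (offsets `0` and `-1`). -/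
def OnlyPC {V : Type} {sortOf : V → VSort} (c : Constraint V sortOf) : Prop :=
  ∀ v j, c.HasVar v j → j = 0 ∨ j = -1


/-- Temporal formulas. The logic `L` (ALTLf) corresponds to those built from
`atom`, `and`, `not`, `nextS`, `untl` (predicate `IsL`); the remaining
constructors are the usual abbreviations (needed e.g. in negation normal form). -/
inductive Formula (V : Type) (sortOf : V → VSort) where
  | tt
  | ff
  | atom (c : Constraint V sortOf)
  | and (φ ψ : Formula V sortOf)
  | or (φ ψ : Formula V sortOf)
  | not (φ : Formula V sortOf)
  | nextS (φ : Formula V sortOf)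
  | nextW (φ : Formula V sortOf)
  | glob (φ : Formula V sortOf)
  | untl (φ ψ : Formula V sortOf)

/-- Assignments of the state variables. -/
abbrev Assign (V : Type) (sortOf : V → VSort) : Type := (v : V) → Dom (sortOf v)

/-- A trace is a (finite) sequence of assignments; genuine traces are nonempty. -/
abbrev Trace (V : Type) (sortOf : V → VSort) : Type := List (Assign V sortOf)

def defaultA {V : Type} {sortOf : V → VSort} : Assign V sortOf := fun _ => default

/-- Valuation of variables with offset at instant `i` of a trace (out-of-range
references get a default value; they are guarded by well-definedness). -/
def traceVal {V : Type} {sortOf : V → VSort} (τ : Trace V sortOf) (i : ℕ) :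
    (v : V) → ℤ → Dom (sortOf v) :=
  fun v j => if 0 ≤ (i : ℤ) + j then (τ.getD ((i : ℤ) + j).toNat defaultA) v else default

/-- The constraint `c` is well-defined at instant `i` of `τ`. -/
def WellDefC {V : Type} {sortOf : V → VSort} (c : Constraint V sortOf)
    (τ : Trace V sortOf) (i : ℕ) : Prop :=
  ∀ v j, c.HasVar v j → 0 ≤ (i : ℤ) + j ∧ (i : ℤ) + j < τ.length

/-- Finite-trace satisfaction `τ,i ⊨ ψ`. Constraints hold vacuously when not
well-defined. `untl` is given by the standard unfolding of the recursive clause. -/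
def Sat {V : Type} {sortOf : V → VSort} (τ : Trace V sortOf) :
    Formula V sortOf → ℕ → Prop
  | .tt, _ => True
  | .ff, _ => False
  | .atom c, i => i < τ.length ∧ (¬ WellDefC c τ i ∨ c.holds (traceVal τ i))
  | .and φ ψ, i => Sat τ φ i ∧ Sat τ ψ i
  | .or φ ψ, i => Sat τ φ i ∨ Sat τ ψ i
  | .not φ, i => ¬ Sat τ φ i
  | .nextS φ, i => i + 1 < τ.length ∧ Sat τ φ (i + 1)
  | .nextW φ, i => i + 1 < τ.length → Sat τ φ (i + 1)
  | .glob φ, i => ∀ j, i ≤ j → j < τ.length → Sat τ φ j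
  | .untl φ ψ, i =>
      ∃ j, i ≤ j ∧ j < τ.length ∧ Sat τ ψ j ∧ ∀ k, i ≤ k → k < j → Sat τ φ k

/-- `τ ⊨ ψ`. -/
def Models {V : Type} {sortOf : V → VSort} (τ : Trace V sortOf)
    (ψ : Formula V sortOf) : Prop :=
  Sat τ ψ 0

/-- Membership in the core logic `L` (`ALTLf`). -/
def IsL {V : Type} {sortOf : V → VSort} : Formula V sortOf → Prop
  | .atom _ => True
  | .and φ ψ => IsL φ ∧ IsL ψ
  | .not φ => IsL φ
  | .nextS φ => IsL φ
  | .untl φ ψ => IsL φ ∧ IsL ψ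
  | _ => False

namespace Formula

variable {V : Type} {sortOf : V → VSort}

def HasVar : Formula V sortOf → V → ℤ → Prop
  | .tt, _, _ => False
  | .ff, _, _ => False
  | .atom c, v, j => c.HasVar v j
  | .and φ ψ, v, j => HasVar φ v j ∨ HasVar ψ v j
  | .or φ ψ, v, j => HasVar φ v j ∨ HasVar ψ v j
  | .not φ, v, j => HasVar φ v j
  | .nextS φ, v, j => HasVar φ v j
  | .nextW φ, v, j => HasVar φ v j
  | .glob φ, v, j => HasVar φ v j
  | .untl φ ψ, v, j => HasVar φ v j ∨ HasVar ψ v j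

/-- The set of constraints occurring in a formula. -/
def constraints : Formula V sortOf → Set (Constraint V sortOf)
  | .tt => ∅
  | .ff => ∅
  | .atom c => {c}
  | .and φ ψ => constraints φ ∪ constraints ψ
  | .or φ ψ => constraints φ ∪ constraints ψ
  | .not φ => constraints φ
  | .nextS φ => constraints φ
  | .nextW φ => constraints φ
  | .glob φ => constraints φ
  | .untl φ ψ => constraints φ ∪ constraints ψ

end Formula

/-- `ψ` has lookahead at most `m` (all variables have offsets in `[0, m]`). -/
def LookaheadLe {V : Type} {sortOf : V → VSort} (ψ : Formula V sortOf) (m : ℕ) : Prop :=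
  ∀ v j, ψ.HasVar v j → 0 ≤ j ∧ j ≤ (m : ℤ)

/-- `ψ` is satisfiable: some (nonempty) trace satisfies it. -/
def Satisfiable {V : Type} {sortOf : V → VSort} (ψ : Formula V sortOf) : Prop :=
  ∃ τ : Trace V sortOf, τ ≠ [] ∧ Models τ ψ

/-- The four monitoring states of RV-LTL. -/
inductive RV where
  | ps | cs | cv | pv
  deriving DecidableEq

/-- `τ ⊨ ⟦ψ = s⟧`: ψ is in monitoring state `s` after trace `τ`. -/
def InState {V : Type} {sortOf : V → VSort} (τ : Trace V sortOf)
    (ψ : Formula V sortOf) : RV → Prop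
  | .ps => Models τ ψ ∧ ∀ τ' : Trace V sortOf, τ' ≠ [] → Models (τ ++ τ') ψ
  | .cs => Models τ ψ ∧ ∃ τ' : Trace V sortOf, τ' ≠ [] ∧ ¬ Models (τ ++ τ') ψ
  | .cv => ¬ Models τ ψ ∧ ∃ τ' : Trace V sortOf, τ' ≠ [] ∧ Models (τ ++ τ') ψ
  | .pv => ¬ Models τ ψ ∧ ∀ τ' : Trace V sortOf, τ' ≠ [] → ¬ Models (τ ++ τ') ψ

section Back

variable {V : Type} {sortOf : V → VSort}

/-- `back(c)`: constraints without lookahead get their variables read as "cur";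
constraints with lookahead 1 become `Xw c̄` where `c̄` uses `pre`/`cur`
(i.e. all offsets are shifted by `-1`). -/
def backC (c : Constraint V sortOf) : Formula V sortOf :=
  if c.hasLook then Formula.nextW (.atom (c.shift (-1))) else Formula.atom c

/-- Replace every constraint atom of a formula. -/
def Formula.mapAtoms (f : Constraint V sortOf → Formula V sortOf) :
    Formula V sortOf → Formula V sortOf
  | .tt => .tt
  | .ff => .ff
  | .atom c => f c
  | .and φ ψ => .and (mapAtoms f φ) (mapAtoms f ψ)
  | .or φ ψ => .or (mapAtoms f φ) (mapAtoms f ψ)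
  | .not φ => .not (mapAtoms f φ)
  | .nextS φ => .nextS (mapAtoms f φ)
  | .nextW φ => .nextW (mapAtoms f φ)
  | .glob φ => .glob (mapAtoms f φ)
  | .untl φ ψ => .untl (mapAtoms f φ) (mapAtoms f ψ)

/-- Negation normal form (`nnf true φ ≡ φ`, `nnf false φ ≡ ¬φ`). -/
def nnf : Bool → Formula V sortOf → Formula V sortOf
  | true, .tt => .tt
  | false, .tt => .ff
  | true, .ff => .ff
  | false, .ff => .tt
  | true, .atom c => .atom c
  | false, .atom c => .not (.atom c)
  | b, .not φ => nnf (!b) φ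
  | true, .and φ ψ => .and (nnf true φ) (nnf true ψ)
  | false, .and φ ψ => .or (nnf false φ) (nnf false ψ)
  | true, .or φ ψ => .or (nnf true φ) (nnf true ψ)
  | false, .or φ ψ => .and (nnf false φ) (nnf false ψ)
  | true, .nextS φ => .nextS (nnf true φ)
  | false, .nextS φ => .nextW (nnf false φ)
  | true, .nextW φ => .nextW (nnf true φ)
  | false, .nextW φ => .nextS (nnf false φ)
  | true, .glob φ => .glob (nnf true φ)
  | false, .glob φ => .untl .tt (nnf false φ)
  | true, .untl φ ψ => .untl (nnf true φ) (nnf true ψ)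
  | false, .untl φ ψ =>
      .or (.glob (nnf false ψ)) (.untl (nnf false ψ) (.and (nnf false φ) (nnf false ψ)))

/-- `ψ_back`: replace each constraint `c` by `back(c)` and take negation normal form. -/
def backF (ψ : Formula V sortOf) : Formula V sortOf :=
  nnf true (ψ.mapAtoms backC)

end Back

section Automata

variable {V : Type} {sortOf : V → VSort}

/-- Letters of the extended alphabet `Σ_λ`: constraints, plus the
last-instant marker `λ` and its negation. -/
inductive Lit (V : Type) (sortOf : V → VSort) where
  | c (c : Constraint V sortOf)
  | lam
  | nlam

/-- Symbols: sets of letters. -/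
abbrev Sym (V : Type) (sortOf : V → VSort) : Type := Set (Lit V sortOf)

/-- Constraint part of a symbol. -/
def constrOf (ς : Sym V sortOf) : Set (Constraint V sortOf) := {c | Lit.c c ∈ ς}

/-- Satisfiability of a set of constraints. -/
def SatC (S : Set (Constraint V sortOf)) : Prop :=
  ∃ σ : (v : V) → ℤ → Dom (sortOf v), ∀ c ∈ S, c.holds σ

/-- A symbol in `Σ_λ` is satisfiable if it does not contain both `λ` and `¬λ`
and its constraints are jointly satisfiable. -/
def SatSym (ς : Sym V sortOf) : Prop :=
  ¬ (Lit.lam ∈ ς ∧ Lit.nlam ∈ ς) ∧ SatC (constrOf ς)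

/-- `R₁ ⊗ R₂`. -/
def owedge (R₁ R₂ : Set (Formula V sortOf × Sym V sortOf)) :
    Set (Formula V sortOf × Sym V sortOf) :=
  {p | ∃ χ₁ ς₁ χ₂ ς₂, (χ₁, ς₁) ∈ R₁ ∧ (χ₂, ς₂) ∈ R₂ ∧ SatSym (ς₁ ∪ ς₂) ∧
        p = (Formula.and χ₁ χ₂, ς₁ ∪ ς₂)}

/-- `R₁ ⊕ R₂`. -/
def ovee (R₁ R₂ : Set (Formula V sortOf × Sym V sortOf)) :
    Set (Formula V sortOf × Sym V sortOf) :=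
  {p | ∃ χ₁ ς₁ χ₂ ς₂, (χ₁, ς₁) ∈ R₁ ∧ (χ₂, ς₂) ∈ R₂ ∧ SatSym (ς₁ ∪ ς₂) ∧
        p = (Formula.or χ₁ χ₂, ς₁ ∪ ς₂)}

/-- The transition function `δ` of the automata construction. -/
def delta : Formula V sortOf → Set (Formula V sortOf × Sym V sortOf)
  | .tt => {(.tt, ∅)}
  | .ff => {(.ff, ∅)}
  | .atom c => {(.tt, {Lit.c c}), (.ff, {Lit.c c.neg})}
  | .not φ =>
      match φ with
      | .atom c => {(.ff, {Lit.c c}), (.tt, {Lit.c c.neg})}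
      | _ => ∅
  | .and φ ψ => owedge (delta φ) (delta ψ)
  | .or φ ψ => ovee (delta φ) (delta ψ)
  | .nextS φ => {(φ, {Lit.nlam}), (.ff, {Lit.lam})}
  | .nextW φ => {(φ, {Lit.nlam}), (.tt, {Lit.lam})}
  | .glob φ => owedge (delta φ) {(.glob φ, {Lit.nlam}), (.tt, {Lit.lam})}
  | .untl φ ψ =>
      ovee (delta ψ) (owedge (delta φ) {(.untl φ ψ, {Lit.nlam}), (.ff, {Lit.lam})})

/-- Iterated `δ`. -/
def deltaStar : List (Sym V sortOf) → Formula V sortOf → Set (Formula V sortOf)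
  | [], φ => {φ}
  | ς :: w, φ => {χ | ∃ φ', (φ', ς) ∈ delta φ ∧ χ ∈ deltaStar w φ'}

/-- States of the NFA `N_{ψ_back}`: formulas, plus the distinguished
final state `q₊` and non-final state `q₋`. -/
inductive NState (V : Type) (sortOf : V → VSort) where
  | fm (φ : Formula V sortOf)
  | plus
  | minus

/-- The transition relation `ϱ` of the NFA, obtained from `δ` by removing
the `λ` markers. -/
inductive NTrans : NState V sortOf → Sym V sortOf → NState V sortOf → Prop where
  | nolam {φ φ' : Formula V sortOf} {ς : Sym V sortOf} :
      (φ', ς) ∈ delta φ → Lit.lam ∉ ς →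
      NTrans (.fm φ) (ς \ {Lit.nlam}) (.fm φ')
  | toPlus {φ : Formula V sortOf} {ς : Sym V sortOf} :
      (Formula.tt, ς) ∈ delta φ → Lit.lam ∈ ς →
      NTrans (.fm φ) (ς \ {Lit.lam}) .plus
  | toMinus {φ : Formula V sortOf} {ς : Sym V sortOf} :
      (Formula.ff, ς) ∈ delta φ → Lit.lam ∈ ς →
      NTrans (.fm φ) (ς \ {Lit.lam}) .minus

/-- Multi-step runs of the NFA. -/
inductive NSteps : NState V sortOf → List (Sym V sortOf) → NState V sortOf → Prop where
  | refl (q : NState V sortOf) : NSteps q [] q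
  | step {q q' q'' : NState V sortOf} {ς : Sym V sortOf} {w : List (Sym V sortOf)} :
      NTrans q ς q' → NSteps q' w q'' → NSteps q (ς :: w) q''

/-- The NFA for `ψb` (initial state `ψb`) accepts the word `w`. -/
def NAccepts (ψb : Formula V sortOf) (w : List (Sym V sortOf)) : Prop :=
  ∃ q' : NState V sortOf, NSteps (.fm ψb) w q' ∧ (q' = NState.fm .tt ∨ q' = NState.plus)

/-- `C± = C ∪ {neg c | c ∈ C}`. -/
def withNegs (Cs : Set (Constraint V sortOf)) : Set (Constraint V sortOf) :=
  Cs ∪ Constraint.neg '' Cs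

/-- A symbol belongs to the alphabet `Σ = 2^{C±}` (only constraint letters, from `C±`). -/
def InSigma (Cs : Set (Constraint V sortOf)) (ς : Sym V sortOf) : Prop :=
  ∀ l ∈ ς, ∃ c ∈ withNegs Cs, l = Lit.c c

/-- A word over `Σ_λ`/`Σ` is well-formed if its first symbol mentions
no `pre` variables. -/
def WellFormedW : List (Sym V sortOf) → Prop
  | [] => False
  | ς₀ :: _ => ∀ c ∈ constrOf ς₀, ¬ MentionsPre c

/-- Consistency of a word of symbols with a trace. -/
def ConsistentL (w : List (Sym V sortOf)) (τ : Trace V sortOf) : Prop :=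
  w.length = τ.length ∧
  ∀ i, i < w.length → ∀ c ∈ constrOf (w.getD i ∅), c.holds (traceVal τ i)

/-- Consistency of a word of constraint sets with a trace. -/
def ConsistentC (w : List (Set (Constraint V sortOf))) (τ : Trace V sortOf) : Prop :=
  w.length = τ.length ∧
  ∀ i, i < w.length → ∀ c ∈ w.getD i ∅, c.holds (traceVal τ i)

/-- λ-consistency of a symbol with instant `i` of a trace. -/
def LamCons (ς : Sym V sortOf) (τ : Trace V sortOf) (i : ℕ) : Prop :=
  ((i < τ.length - 1 ∧ Lit.lam ∉ ς) ∨ (i = τ.length - 1 ∧ Lit.nlam ∉ ς)) ∧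
  (if i = 0 then
    (∀ c ∈ constrOf ς, ¬ MentionsPre c) ∧ ∀ c ∈ constrOf ς, c.holds (traceVal τ 0)
  else
    ∀ c ∈ constrOf ς, c.holds (traceVal τ i))

/-- Membership in `L_back`: negation normal form over constraints on
`V_pre ∪ V_cur`. -/
def IsLB : Formula V sortOf → Prop
  | .atom c => OnlyPC c
  | .not φ => match φ with
      | .atom c => OnlyPC c
      | _ => False
  | .and φ ψ => IsLB φ ∧ IsLB ψ
  | .or φ ψ => IsLB φ ∧ IsLB ψ
  | .nextS φ => IsLB φ
  | .nextW φ => IsLB φ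
  | .glob φ => IsLB φ
  | .untl φ ψ => IsLB φ ∧ IsLB ψ
  | _ => False

/-- Safe lookback. -/
def SafeLB : Formula V sortOf → Prop
  | .tt => True
  | .ff => True
  | .atom c => ¬ MentionsPre c
  | .not φ => SafeLB φ
  | .and φ ψ => SafeLB φ ∧ SafeLB ψ
  | .or φ ψ => SafeLB φ ∧ SafeLB ψ
  | .nextS _ => True
  | .nextW _ => True
  | .glob φ => SafeLB φ
  | .untl φ ψ => SafeLB φ ∧ SafeLB ψ

end Automata

section DFA

variable {V : Type} {sortOf : V → VSort}

/-- `ThetaOf Cs`: the maximal satisfiable subsets of `Cs±`. -/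
def ThetaOf (Cs : Set (Constraint V sortOf)) : Set (Set (Constraint V sortOf)) :=
  {ς | ς ⊆ withNegs Cs ∧ SatC ς ∧ ∀ c ∈ withNegs Cs, SatC (insert c ς) → c ∈ ς}

/-- `Θ_cur`: maximal satisfiable subsets of `C_cur±`, with `C_cur` the
constraints of `Cs` mentioning only `cur` variables. -/
def ThetaCur (Cs : Set (Constraint V sortOf)) : Set (Set (Constraint V sortOf)) :=
  ThetaOf {c ∈ Cs | OnlyCur c}

/-- A word in `Θ_cur Θ*`. -/
def ThWord (Cs : Set (Constraint V sortOf)) (w : List (Set (Constraint V sortOf))) :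
    Prop :=
  ∃ ς₀ w', w = ς₀ :: w' ∧ ς₀ ∈ ThetaCur Cs ∧ ∀ ς ∈ w', ς ∈ ThetaOf Cs

/-- States of the DFA: sets of NFA states (subset construction). -/
abbrev DState (V : Type) (sortOf : V → VSort) : Type := Set (NState V sortOf)

/-- Initial DFA state `{q₀}`. -/
def q0 (ψb : Formula V sortOf) : DState V sortOf := {NState.fm ψb}

/-- The transition function `Δ` of the subset construction. -/
def DeltaT (P : DState V sortOf) (ς : Set (Constraint V sortOf)) : DState V sortOf :=
  {q' | ∃ q ∈ P, ∃ ς' : Sym V sortOf, NTrans q ς' q' ∧ ∀ l ∈ ς', ∃ c ∈ ς, l = Lit.c c}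

/-- One DFA step: from the initial state `{q₀}` on symbols of `Θ_cur`, from other
states on symbols of `Θ`. -/
def DTrans (ψb : Formula V sortOf) (P : DState V sortOf)
    (ς : Set (Constraint V sortOf)) (P' : DState V sortOf) : Prop :=
  ((P = q0 ψb ∧ ς ∈ ThetaCur ψb.constraints) ∨
   (P ≠ q0 ψb ∧ ς ∈ ThetaOf ψb.constraints)) ∧
  P' = DeltaT P ς

/-- Multi-step runs of the DFA: `P →*_w P'`. -/
inductive DSteps (ψb : Formula V sortOf) :
    DState V sortOf → List (Set (Constraint V sortOf)) → DState V sortOf → Prop where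
  | refl (P : DState V sortOf) : DSteps ψb P [] P
  | step {P P' P'' : DState V sortOf} {ς : Set (Constraint V sortOf)}
      {w : List (Set (Constraint V sortOf))} :
      DTrans ψb P ς P' → DSteps ψb P' w P'' → DSteps ψb P (ς :: w) P''

/-- Final (accepting) DFA states. -/
def DFinal (P : DState V sortOf) : Prop :=
  NState.fm Formula.tt ∈ P ∨ NState.plus ∈ P

/-- `P'` is reachable from `P` in the DFA. -/
def DReach (ψb : Formula V sortOf) (P P' : DState V sortOf) : Prop :=
  ∃ w, DSteps ψb P w P'

/-- The DFA for `ψb` accepts the word `w`. -/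
def DAccepts (ψb : Formula V sortOf) (w : List (Set (Constraint V sortOf))) : Prop :=
  ∃ P : DState V sortOf, DSteps ψb (q0 ψb) w P ∧ DFinal P

end DFA

section History

variable {V : Type} {sortOf : V → VSort}

/-- Semantic formulas with free variables `V₀ ∪ V` (quantifier elimination lets
us identify history constraints with their sets of models): the first argument
is the assignment of the `V₀`-copies, the second that of `V`. -/
abbrev HF (V : Type) (sortOf : V → VSort) : Type :=
  Assign V sortOf → Assign V sortOf → Prop

/-- Valuation reading `cur` variables in `a` and `pre` variables in `u`. -/
def pairVal (u a : Assign V sortOf) : (v : V) → ℤ → Dom (sortOf v) :=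
  fun v j => if j = 0 then a v else if j = -1 then u v else default

/-- `φ_init = ⋀_{v ∈ V} v = v₀`. -/
def hinit : HF V sortOf := fun a₀ a => ∀ v, a₀ v = a v

/-- `update(φ, C') = ∃Ū. φ(Ū) ∧ ⋀ C'(Ū, V̄)`. -/
def updateH (φ : HF V sortOf) (ς : Set (Constraint V sortOf)) : HF V sortOf :=
  fun a₀ a => ∃ u : Assign V sortOf, φ a₀ u ∧ ∀ c ∈ ς, c.holds (pairVal u a)

/-- The history constraint `h(w)`. -/
def histC (w : List (Set (Constraint V sortOf))) : HF V sortOf :=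
  w.foldl updateH hinit

/-- Logical equivalence of semantic formulas. -/
def HFEquiv (φ χ : HF V sortOf) : Prop := ∀ a₀ a, φ a₀ a ↔ χ a₀ a

/-- Satisfiability of a semantic formula. -/
def HSat (φ : HF V sortOf) : Prop := ∃ a₀ a, φ a₀ a

/-- The defining property of a history set for the DFA of `ψb`. -/
def HistProp (ψb : Formula V sortOf) (Φ : Set (DState V sortOf × HF V sortOf)) : Prop :=
  ∀ (P' : DState V sortOf) (w : List (Set (Constraint V sortOf))),
    ThWord ψb.constraints w → DSteps ψb (q0 ψb) w P' →
    ∃ φ, (P', φ) ∈ Φ ∧ HFEquiv (histC w) φ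

/-- A history set: a minimal set with the above property. -/
def IsHistorySet (ψb : Formula V sortOf)
    (Φ : Set (DState V sortOf × HF V sortOf)) : Prop :=
  HistProp ψb Φ ∧ ∀ Φ' ⊆ Φ, HistProp ψb Φ' → Φ' = Φ

/-- A summary `(Φ, ∼)` for the DFA of `ψb`. -/
structure Summary (ψb : Formula V sortOf) where
  Phi : Set (DState V sortOf × HF V sortOf)
  sim : HF V sortOf → HF V sortOf → Prop
  hist : IsHistorySet ψb Phi
  equiv : Equivalence sim
  contains_equiv : ∀ φ χ : HF V sortOf,
    (∃ q, (q, φ) ∈ Phi) → (∃ q, (q, χ) ∈ Phi) → HFEquiv φ χ → sim φ χ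
  cond_a : ∀ (q : DState V sortOf) (φ χ : HF V sortOf),
    (q, φ) ∈ Phi → (q, χ) ∈ Phi → sim φ χ →
    ∀ a₀ a, φ a₀ a → ∃ a', χ a₀ a'
  cond_b : ∀ (q : DState V sortOf) (φ χ : HF V sortOf),
    (q, φ) ∈ Phi → (q, χ) ∈ Phi → sim φ χ →
    ∀ ς q', DTrans ψb q ς q' → sim (updateH φ ς) (updateH χ ς)

/-- The summary is finite: `∼` has finitely many classes on `Φ`. -/
def FiniteSummary {ψb : Formula V sortOf} (S : Summary ψb) : Prop :=
  ∃ R : Set (HF V sortOf), R.Finite ∧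
    ∀ q φ, (q, φ) ∈ S.Phi → ∃ χ ∈ R, S.sim φ χ

/-- A constraint graph `CG_ψ(P₀, ∼)`: the inductively generated graph whose
nodes pair DFA states with (∼-representatives of) history formulas. -/
structure CGraph (ψb : Formula V sortOf) (P₀ : DState V sortOf)
    (sim : HF V sortOf → HF V sortOf → Prop) where
  nodes : Set (DState V sortOf × HF V sortOf)
  edge : (DState V sortOf × HF V sortOf) → Set (Constraint V sortOf) →
         (DState V sortOf × HF V sortOf) → Prop
  init_mem : (P₀, hinit) ∈ nodes
  edge_mem : ∀ n ς n', edge n ς n' → n ∈ nodes ∧ n' ∈ nodes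
  edge_sound : ∀ n ς n', edge n ς n' →
    DTrans ψb n.1 ς n'.1 ∧ HSat (updateH n.2 ς) ∧ sim n'.2 (updateH n.2 ς)
  closed : ∀ n ∈ nodes, ∀ ς (P' : DState V sortOf),
    DTrans ψb n.1 ς P' → HSat (updateH n.2 ς) → ∃ φ', edge n ς (P', φ')
  minimal : ∀ n ∈ nodes,
    Relation.ReflTransGen (fun a b => ∃ ς, edge a ς b) (P₀, hinit) n

/-- Paths in a constraint graph, labeled by words. -/
inductive CGSteps {ψb : Formula V sortOf} {P₀ : DState V sortOf}
    {sim : HF V sortOf → HF V sortOf → Prop} (G : CGraph ψb P₀ sim) :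
    (DState V sortOf × HF V sortOf) → List (Set (Constraint V sortOf)) →
    (DState V sortOf × HF V sortOf) → Prop where
  | refl (n : DState V sortOf × HF V sortOf) : CGSteps G n [] n
  | step {n n' n'' : DState V sortOf × HF V sortOf}
      {ς : Set (Constraint V sortOf)} {w : List (Set (Constraint V sortOf))} :
      G.edge n ς n' → CGSteps G n' w n'' → CGSteps G n (ς :: w) n''

/-- `α ⊨ FSat(G)(V̄)`: some final node's formula is satisfiable with its
`V₀`-part set to `α`. -/
def FSatAt {ψb : Formula V sortOf} {P₀ : DState V sortOf}
    {sim : HF V sortOf → HF V sortOf → Prop} (G : CGraph ψb P₀ sim)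
    (α : Assign V sortOf) : Prop :=
  ∃ n ∈ G.nodes, DFinal n.1 ∧ ∃ b, n.2 α b

/-- `α ⊨ FUns(G)(V̄)`: dually, with non-final nodes. -/
def FUnsAt {ψb : Formula V sortOf} {P₀ : DState V sortOf}
    {sim : HF V sortOf → HF V sortOf → Prop} (G : CGraph ψb P₀ sim)
    (α : Assign V sortOf) : Prop :=
  ∃ n ∈ G.nodes, ¬ DFinal n.1 ∧ ∃ b, n.2 α b

end History

/-!
A DFA run yields an NFA run by the subset construction, traced backwards: each NFA letter is
contained in the DFA letter read at the same instant, so it is consistent with the same trace,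
and the first DFA letter lies in `Θ_cur`, which makes the NFA word well-formed.

Conversely, along an NFA run consistent with `τ`, let the DFA read at instant `i` the set of all
constraints of `C±` true at instant `i` of `τ` (only those of `C_cur±` while in state `{q₀}`).
It contains the NFA letter read at `i`, so the DFA state keeps containing the NFA state. The
restriction at `{q₀}` loses nothing because `ψ_back` has safe lookback: the letters `δ` reads
from `ψ_back` itself mention no `V_pre`, and the constraints of `ψ_back` mention only
`V_pre ∪ V_cur`.
-/

theorem _root_.List.Forall₂.comp {α β γ : Type*} {R : α → β → Prop} {S : β → γ → Prop}
    {T : α → γ → Prop} (h : ∀ a b c, R a b → S b c → T a c) :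
    ∀ {l₁ l₂ l₃}, List.Forall₂ R l₁ l₂ → List.Forall₂ S l₂ l₃ → List.Forall₂ T l₁ l₃
  | _, _, _, .nil, .nil => .nil
  | _, _, _, .cons hab hR, .cons hbc hS => .cons (h _ _ _ hab hbc) (comp h hR hS)

theorem _root_.List.forall₂_map_range_iff {α β : Type*} {R : α → β → Prop} {l : List α} {n : ℕ}
    {f : ℕ → β} (d : α) :
    List.Forall₂ R l ((List.range n).map f) ↔
      l.length = n ∧ ∀ i < l.length, R (l.getD i d) (f i) := by
  rw [List.forall₂_iff_get]
  simp +contextual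

namespace Expr

variable {V : Type} {sortOf : V → VSort}

theorem hasVar_shift {s : VSort} {e : Expr V sortOf s} {d : ℤ} {v : V} {i : ℤ}
    (h : (e.shift d).HasVar v i) : ∃ j, e.HasVar v j ∧ i = j + d := by
  induction e with
  | var w j => exact ⟨j, ⟨h.1, rfl⟩, h.2.symm⟩
  | const k => exact h.elim
  | add e₁ e₂ ih₁ ih₂ =>
    rcases h with h | h
    · obtain ⟨j, hj, rfl⟩ := ih₁ h; exact ⟨j, Or.inl hj, rfl⟩
    · obtain ⟨j, hj, rfl⟩ := ih₂ h; exact ⟨j, Or.inr hj, rfl⟩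
  | smul k e ih => exact ih h

theorem eq_zero_of_hasLook_eq_false {s : VSort} {e : Expr V sortOf s} {v : V} {j : ℤ}
    (h : e.hasLook = false) (hv : e.HasVar v j) : j = 0 := by
  induction e with
  | var w i => simpa [hasLook, ← hv.2] using h
  | const k => exact hv.elim
  | add e₁ e₂ ih₁ ih₂ =>
    simp only [hasLook, Bool.or_eq_false_iff] at h
    exact hv.elim (ih₁ h.1) (ih₂ h.2)
  | smul k e ih => exact ih h hv

end Expr

namespace Constraint

variable {V : Type} {sortOf : V → VSort}

theorem hasVar_shift {c : Constraint V sortOf} {d : ℤ} {v : V} {i : ℤ}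
    (h : (c.shift d).HasVar v i) : ∃ j, c.HasVar v j ∧ i = j + d := by
  cases c <;>
    rcases h with h | h <;>
    obtain ⟨j, hj, rfl⟩ := Expr.hasVar_shift h <;>
    exact ⟨j, by simp [HasVar, hj], rfl⟩

theorem eq_zero_of_hasLook_eq_false {c : Constraint V sortOf} {v : V} {j : ℤ}
    (h : c.hasLook = false) (hv : c.HasVar v j) : j = 0 := by
  cases c <;>
    simp only [hasLook, Bool.or_eq_false_iff] at h <;>
    exact hv.elim (Expr.eq_zero_of_hasLook_eq_false h.1) (Expr.eq_zero_of_hasLook_eq_false h.2)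

theorem hasVar_neg {c : Constraint V sortOf} {v : V} {j : ℤ} :
    c.neg.HasVar v j ↔ c.HasVar v j := by
  cases c <;> simp [neg, HasVar, or_comm]

theorem neg_neg (c : Constraint V sortOf) : c.neg.neg = c := by
  cases c <;> rfl

theorem holds_neg_iff {c : Constraint V sortOf} {σ : (v : V) → ℤ → Dom (sortOf v)} :
    c.neg.holds σ ↔ ¬ c.holds σ := by
  cases c <;> simp [neg, holds]

end Constraint

section ConstraintClasses

variable {V : Type} {sortOf : V → VSort} {c : Constraint V sortOf}

theorem onlyPC_neg_iff : OnlyPC c.neg ↔ OnlyPC c := by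
  simp only [OnlyPC, Constraint.hasVar_neg]

theorem onlyCur_neg_iff : OnlyCur c.neg ↔ OnlyCur c := by
  simp only [OnlyCur, Constraint.hasVar_neg]

theorem mentionsPre_neg_iff : MentionsPre c.neg ↔ MentionsPre c := by
  simp only [MentionsPre, Constraint.hasVar_neg]

theorem OnlyPC.onlyCur (h : OnlyPC c) (h' : ¬ MentionsPre c) : OnlyCur c := by
  intro v j hv
  rcases h v j hv with h0 | h1
  · exact h0
  · exact absurd ⟨v, j, by omega, hv⟩ h'

theorem OnlyCur.not_mentionsPre (h : OnlyCur c) : ¬ MentionsPre c := by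
  rintro ⟨v, j, hj, hv⟩
  exact absurd (h v j hv) hj.ne

end ConstraintClasses

section WithNegs

variable {V : Type} {sortOf : V → VSort} {Cs Cs' : Set (Constraint V sortOf)}
  {c : Constraint V sortOf}

theorem withNegs_mono (h : Cs ⊆ Cs') : withNegs Cs ⊆ withNegs Cs' :=
  Set.union_subset_union h (Set.image_mono h)

theorem neg_mem_withNegs (h : c ∈ withNegs Cs) : c.neg ∈ withNegs Cs := by
  rcases h with hc | ⟨d, hd, rfl⟩
  · exact Or.inr ⟨c, hc, rfl⟩
  · exact Or.inl (by rwa [Constraint.neg_neg])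

theorem mem_withNegs_sep {p : Constraint V sortOf → Prop} (hp : ∀ c, p c.neg ↔ p c) :
    c ∈ withNegs {c ∈ Cs | p c} ↔ c ∈ withNegs Cs ∧ p c := by
  constructor
  · rintro (⟨hc, hpc⟩ | ⟨d, ⟨hd, hpd⟩, rfl⟩)
    · exact ⟨Or.inl hc, hpc⟩
    · exact ⟨Or.inr ⟨d, hd, rfl⟩, (hp d).2 hpd⟩
  · rintro ⟨hc | ⟨d, hd, rfl⟩, hpc⟩
    · exact Or.inl ⟨hc, hpc⟩
    · exact Or.inr ⟨d, ⟨hd, (hp d).1 hpc⟩, rfl⟩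

theorem onlyPC_of_mem_withNegs (hCs : ∀ c ∈ Cs, OnlyPC c) (h : c ∈ withNegs Cs) :
    OnlyPC c := by
  rcases h with hc | ⟨d, hd, rfl⟩
  · exact hCs c hc
  · exact onlyPC_neg_iff.2 (hCs d hd)

def maxSatSet (Cs : Set (Constraint V sortOf)) (σ : (v : V) → ℤ → Dom (sortOf v)) :
    Set (Constraint V sortOf) :=
  {c ∈ withNegs Cs | c.holds σ}

theorem maxSatSet_mem_thetaOf (Cs : Set (Constraint V sortOf))
    (σ : (v : V) → ℤ → Dom (sortOf v)) : maxSatSet Cs σ ∈ ThetaOf Cs := by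
  refine ⟨Set.sep_subset _ _, ⟨σ, fun c hc => hc.2⟩, fun c hc ⟨σ', hσ'⟩ => ⟨hc, ?_⟩⟩
  by_contra hcσ
  have hneg : c.neg ∈ maxSatSet Cs σ := ⟨neg_mem_withNegs hc, Constraint.holds_neg_iff.2 hcσ⟩
  exact Constraint.holds_neg_iff.1 (hσ' _ (Set.mem_insert_of_mem _ hneg))
    (hσ' c (Set.mem_insert c _))

end WithNegs

namespace Formula

variable {V : Type} {sortOf : V → VSort}

theorem hasVar_of_mem_constraints {φ : Formula V sortOf} {c : Constraint V sortOf}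
    (h : c ∈ φ.constraints) {v : V} {j : ℤ} (hv : c.HasVar v j) : φ.HasVar v j := by
  induction φ <;> simp_all [constraints, HasVar] <;> grind

theorem constraints_nnf (b : Bool) (φ : Formula V sortOf) :
    (nnf b φ).constraints ⊆ φ.constraints := by
  induction φ generalizing b <;> cases b <;> simp_all [nnf, constraints] <;> grind

theorem exists_of_mem_constraints_mapAtoms {f : Constraint V sortOf → Formula V sortOf}
    {ψ : Formula V sortOf} {c' : Constraint V sortOf} (h : c' ∈ (ψ.mapAtoms f).constraints) :
    ∃ c ∈ ψ.constraints, c' ∈ (f c).constraints := by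
  induction ψ <;> simp_all [mapAtoms, constraints] <;> grind

end Formula

section Back

variable {V : Type} {sortOf : V → VSort}

theorem onlyPC_of_mem_constraints_backC {c c' : Constraint V sortOf}
    (hc : ∀ v j, c.HasVar v j → 0 ≤ j ∧ j ≤ 1) (h : c' ∈ (backC c).constraints) :
    OnlyPC c' := by
  intro v j hv
  cases hl : c.hasLook <;>
    simp [backC, hl, Formula.constraints] at h <;> subst h
  · exact Or.inl (Constraint.eq_zero_of_hasLook_eq_false hl hv)
  · obtain ⟨j₀, hj₀, rfl⟩ := Constraint.hasVar_shift hv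
    have := hc v j₀ hj₀
    omega

theorem backF_onlyPC {ψ : Formula V sortOf} (h1 : LookaheadLe ψ 1) :
    ∀ c ∈ (backF ψ).constraints, OnlyPC c := by
  intro c' hc'
  obtain ⟨c, hc, hc'⟩ :=
    Formula.exists_of_mem_constraints_mapAtoms (Formula.constraints_nnf _ _ hc')
  exact onlyPC_of_mem_constraints_backC
    (fun v j hv => by exact_mod_cast h1 v j (Formula.hasVar_of_mem_constraints hc hv)) hc'

theorem safeLB_nnf {φ : Formula V sortOf} (h : SafeLB φ) (b : Bool) : SafeLB (nnf b φ) := by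
  induction φ generalizing b <;> cases b <;> simp_all [nnf, SafeLB]

theorem safeLB_mapAtoms {f : Constraint V sortOf → Formula V sortOf} (hf : ∀ c, SafeLB (f c))
    (ψ : Formula V sortOf) : SafeLB (ψ.mapAtoms f) := by
  induction ψ <;> simp_all [Formula.mapAtoms, SafeLB]

theorem safeLB_backC (c : Constraint V sortOf) : SafeLB (backC c) := by
  cases hl : c.hasLook
  · simp only [backC, hl]
    rintro ⟨v, j, hj, hv⟩
    exact hj.ne (Constraint.eq_zero_of_hasLook_eq_false hl hv)
  · simp [backC, hl, SafeLB]

theorem backF_safeLB (ψ : Formula V sortOf) : SafeLB (backF ψ) :=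
  safeLB_nnf (safeLB_mapAtoms safeLB_backC ψ) true

end Back

section Delta

variable {V : Type} {sortOf : V → VSort} {S : Set (Constraint V sortOf)}
  {R₁ R₂ : Set (Formula V sortOf × Sym V sortOf)}

theorem constrOf_subset_of_mem_owedge (h₁ : ∀ p ∈ R₁, constrOf p.2 ⊆ S)
    (h₂ : ∀ p ∈ R₂, constrOf p.2 ⊆ S) : ∀ p ∈ owedge R₁ R₂, constrOf p.2 ⊆ S := by
  rintro _ ⟨χ₁, ς₁, χ₂, ς₂, hp₁, hp₂, -, rfl⟩ c hc
  exact hc.elim (h₁ _ hp₁ ·) (h₂ _ hp₂ ·)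

theorem constrOf_subset_of_mem_ovee (h₁ : ∀ p ∈ R₁, constrOf p.2 ⊆ S)
    (h₂ : ∀ p ∈ R₂, constrOf p.2 ⊆ S) : ∀ p ∈ ovee R₁ R₂, constrOf p.2 ⊆ S := by
  rintro _ ⟨χ₁, ς₁, χ₂, ς₂, hp₁, hp₂, -, rfl⟩ c hc
  exact hc.elim (h₁ _ hp₁ ·) (h₂ _ hp₂ ·)

theorem constrOf_subset_of_mem_markers {χ χ' : Formula V sortOf} :
    ∀ p ∈ ({(χ, {Lit.nlam}), (χ', {Lit.lam})} : Set (Formula V sortOf × Sym V sortOf)),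
      constrOf p.2 ⊆ S := by
  simp [constrOf]

/-- The letters `δ` reads at the current instant come from atoms not under a next operator. -/
theorem delta_not_mentionsPre {φ : Formula V sortOf} (hφ : SafeLB φ) :
    ∀ p ∈ delta φ, constrOf p.2 ⊆ {c | ¬ MentionsPre c} := by
  induction φ with
  | and φ ψ ihφ ihψ => exact constrOf_subset_of_mem_owedge (ihφ hφ.1) (ihψ hφ.2)
  | or φ ψ ihφ ihψ => exact constrOf_subset_of_mem_ovee (ihφ hφ.1) (ihψ hφ.2)
  | glob φ ih => exact constrOf_subset_of_mem_owedge (ih hφ) constrOf_subset_of_mem_markers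
  | untl φ ψ ihφ ihψ =>
    exact constrOf_subset_of_mem_ovee (ihψ hφ.2)
      (constrOf_subset_of_mem_owedge (ihφ hφ.1) constrOf_subset_of_mem_markers)
  | nextS φ => exact constrOf_subset_of_mem_markers
  | nextW φ => exact constrOf_subset_of_mem_markers
  | not φ =>
    cases φ <;> simp_all [delta, SafeLB, constrOf, mentionsPre_neg_iff]
  | _ => simp_all [delta, SafeLB, constrOf, mentionsPre_neg_iff]

theorem NTrans.not_mentionsPre {φ : Formula V sortOf} {ς' : Sym V sortOf}
    {q' : NState V sortOf} (h : NTrans (.fm φ) ς' q') (hφ : SafeLB φ) :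
    ∀ c ∈ constrOf ς', ¬ MentionsPre c := by
  obtain ⟨χ, ς, hδ, hsub⟩ : ∃ χ ς, (χ, ς) ∈ delta φ ∧ ς' ⊆ ς := by
    cases h <;> exact ⟨_, _, ‹_›, Set.sdiff_subset⟩
  exact fun c hc => delta_not_mentionsPre hφ _ hδ (hsub hc)

end Delta

section Subset

variable {V : Type} {sortOf : V → VSort} {ψb : Formula V sortOf}

/-- `DeltaT` and `InSigma` are phrased with this relation, definitionally. -/
def SymOver (S : Set (Constraint V sortOf)) (ς : Sym V sortOf) : Prop :=
  ∀ l ∈ ς, ∃ c ∈ S, l = Lit.c c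

theorem SymOver.mono {S T : Set (Constraint V sortOf)} {ς : Sym V sortOf} (h : SymOver S ς)
    (hST : S ⊆ T) : SymOver T ς := fun l hl =>
  let ⟨c, hc, hl⟩ := h l hl
  ⟨c, hST hc, hl⟩

theorem SymOver.constrOf_subset {S : Set (Constraint V sortOf)} {ς : Sym V sortOf}
    (h : SymOver S ς) : constrOf ς ⊆ S := fun c hc => by
  obtain ⟨c', hc', heq⟩ := h _ hc
  cases heq
  exact hc'

theorem dFinal_iff {P : DState V sortOf} :
    DFinal P ↔ ∃ q ∈ P, q = .fm .tt ∨ q = .plus := by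
  constructor
  · rintro (h | h)
    exacts [⟨_, h, Or.inl rfl⟩, ⟨_, h, Or.inr rfl⟩]
  · rintro ⟨q, hq, rfl | rfl⟩
    exacts [Or.inl hq, Or.inr hq]

theorem DTrans.subset_withNegs {P P' : DState V sortOf} {ς : Set (Constraint V sortOf)}
    (h : DTrans ψb P ς P') : ς ⊆ withNegs ψb.constraints := by
  rcases h.1 with ⟨-, hθ⟩ | ⟨-, hθ⟩
  · exact hθ.1.trans (withNegs_mono (Set.sep_subset _ _))
  · exact hθ.1

theorem onlyCur_of_mem_thetaCur {Cs ς : Set (Constraint V sortOf)} {c : Constraint V sortOf}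
    (hς : ς ∈ ThetaCur Cs) (hc : c ∈ ς) : OnlyCur c :=
  ((mem_withNegs_sep fun _ => onlyCur_neg_iff).1 (hς.1 hc)).2

theorem DSteps.head_mem_thetaCur {ς : Set (Constraint V sortOf)}
    {w : List (Set (Constraint V sortOf))} {P : DState V sortOf}
    (h : DSteps ψb (q0 ψb) (ς :: w) P) : ς ∈ ThetaCur ψb.constraints := by
  obtain _ | ⟨hT, -⟩ := h
  rcases hT.1 with ⟨-, hθ⟩ | ⟨hne, -⟩
  · exact hθ
  · exact absurd rfl hne

theorem DSteps.exists_nSteps {P P' : DState V sortOf} {w : List (Set (Constraint V sortOf))}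
    (h : DSteps ψb P w P') {q' : NState V sortOf} (hq' : q' ∈ P') :
    ∃ q ∈ P, ∃ u, NSteps q u q' ∧
      List.Forall₂ (fun ς' ς => InSigma ψb.constraints ς' ∧ SymOver ς ς') u w := by
  induction h with
  | refl P => exact ⟨q', hq', [], .refl q', .nil⟩
  | step hT _ ih =>
    obtain ⟨q₁, hq₁, u, hrun, hu⟩ := ih hq'
    rw [hT.2] at hq₁
    obtain ⟨q, hq, ς', hT', hς'⟩ := hq₁
    exact ⟨q, hq, ς' :: u, .step hT' hrun, .cons ⟨SymOver.mono hς' hT.subset_withNegs, hς'⟩ hu⟩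

end Subset

section Determinize

variable {V : Type} {sortOf : V → VSort} {ψb : Formula V sortOf}

open Classical in
def dfaSymbol (ψb : Formula V sortOf) (P : DState V sortOf)
    (σ : (v : V) → ℤ → Dom (sortOf v)) : Set (Constraint V sortOf) :=
  maxSatSet (if P = q0 ψb then {c ∈ ψb.constraints | OnlyCur c} else ψb.constraints) σ

theorem dTrans_dfaSymbol (P : DState V sortOf) (σ : (v : V) → ℤ → Dom (sortOf v)) :
    DTrans ψb P (dfaSymbol ψb P σ) (DeltaT P (dfaSymbol ψb P σ)) := by
  refine ⟨?_, rfl⟩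
  by_cases hP : P = q0 ψb
  · exact Or.inl ⟨hP, by simpa [dfaSymbol, ThetaCur, hP] using maxSatSet_mem_thetaOf _ σ⟩
  · exact Or.inr ⟨hP, by simpa [dfaSymbol, ThetaCur, hP] using maxSatSet_mem_thetaOf _ σ⟩

theorem dfaSymbol_holds {P : DState V sortOf} {σ : (v : V) → ℤ → Dom (sortOf v)} :
    ∀ c ∈ dfaSymbol ψb P σ, c.holds σ :=
  fun _ hc => hc.2

theorem mem_deltaT_dfaSymbol (hPC : ∀ c ∈ ψb.constraints, OnlyPC c) (hsafe : SafeLB ψb)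
    {P : DState V sortOf} {q q' : NState V sortOf} {ς' : Sym V sortOf}
    {σ : (v : V) → ℤ → Dom (sortOf v)} (hq : q ∈ P) (hT : NTrans q ς' q')
    (hsig : InSigma ψb.constraints ς') (hσ : ∀ c ∈ constrOf ς', c.holds σ) :
    q' ∈ DeltaT P (dfaSymbol ψb P σ) := by
  refine ⟨q, hq, ς', hT, fun l hl => ?_⟩
  obtain ⟨c, hc, rfl⟩ := hsig l hl
  refine ⟨c, ?_, rfl⟩
  by_cases hP : P = q0 ψb
  · subst hP
    cases hq
    have hcur : OnlyCur c :=
      (onlyPC_of_mem_withNegs hPC hc).onlyCur (hT.not_mentionsPre hsafe c hl)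
    simpa [dfaSymbol, maxSatSet, mem_withNegs_sep (fun _ => onlyCur_neg_iff)] using
      ⟨⟨hc, hcur⟩, hσ c hl⟩
  · simpa [dfaSymbol, maxSatSet, hP] using ⟨hc, hσ c hl⟩

theorem NSteps.exists_dSteps (hPC : ∀ c ∈ ψb.constraints, OnlyPC c) (hsafe : SafeLB ψb)
    {q q' : NState V sortOf} {u : List (Sym V sortOf)} (h : NSteps q u q')
    {P : DState V sortOf} (hq : q ∈ P) {σs : List ((v : V) → ℤ → Dom (sortOf v))}
    (hu : List.Forall₂
      (fun ς σ => InSigma ψb.constraints ς ∧ ∀ c ∈ constrOf ς, c.holds σ) u σs) :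
    ∃ w P', DSteps ψb P w P' ∧ q' ∈ P' ∧
      List.Forall₂ (fun ς σ => ∀ c ∈ ς, c.holds σ) w σs := by
  induction h generalizing P σs with
  | refl q => exact ⟨[], P, .refl P, hq, by cases hu; exact .nil⟩
  | step hT _ ih =>
    obtain _ | ⟨⟨hsig, hσ⟩, hu⟩ := hu
    obtain ⟨w, P', hrun, hq', hw⟩ := ih (mem_deltaT_dfaSymbol hPC hsafe hq hT hsig hσ) hu
    exact ⟨_ :: w, P', .step (dTrans_dfaSymbol P _) hrun, hq', .cons dfaSymbol_holds hw⟩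

end Determinize

section Consistency

variable {V : Type} {sortOf : V → VSort}

def traceVals (τ : Trace V sortOf) : List ((v : V) → ℤ → Dom (sortOf v)) :=
  (List.range τ.length).map (traceVal τ)

theorem consistentC_iff {w : List (Set (Constraint V sortOf))} {τ : Trace V sortOf} :
    ConsistentC w τ ↔ List.Forall₂ (fun ς σ => ∀ c ∈ ς, c.holds σ) w (traceVals τ) := by
  rw [ConsistentC, traceVals, List.forall₂_map_range_iff ∅]

theorem consistentL_iff {u : List (Sym V sortOf)} {τ : Trace V sortOf} :
    ConsistentL u τ ↔
      List.Forall₂ (fun ς σ => ∀ c ∈ constrOf ς, c.holds σ) u (traceVals τ) := by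
  rw [ConsistentL, traceVals, List.forall₂_map_range_iff ∅]

end Consistency

section Acceptance

variable {V : Type} {sortOf : V → VSort} {ψb : Formula V sortOf} {τ : Trace V sortOf}

theorem exists_nAccepts_of_dAccepts (hτ : τ ≠ []) {w : List (Set (Constraint V sortOf))}
    (hcons : ConsistentC w τ) (hacc : DAccepts ψb w) :
    ∃ u : List (Sym V sortOf), WellFormedW u ∧ (∀ ς ∈ u, InSigma ψb.constraints ς) ∧
      ConsistentL u τ ∧ NAccepts ψb u := by
  obtain ⟨P, hrun, hfin⟩ := hacc
  obtain ⟨qf, hqf, hfinal⟩ := dFinal_iff.1 hfin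
  obtain ⟨q, rfl, u, hnrun, huw⟩ := hrun.exists_nSteps hqf
  obtain ⟨hsig, huw⟩ := (List.forall₂_and_left _ _).1 huw
  refine ⟨u, ?_, hsig, ?_, qf, hnrun, hfinal⟩
  · obtain _ | ⟨hς', -⟩ := huw
    · exact hτ (List.length_eq_zero_iff.1 (hcons.1.symm))
    · exact fun c hc =>
        (onlyCur_of_mem_thetaCur hrun.head_mem_thetaCur (hς'.constrOf_subset hc)).not_mentionsPre
  · exact consistentL_iff.2 <|
      huw.comp (fun _ _ _ hς' hσ c hc => hσ c (SymOver.constrOf_subset hς' hc))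
        (consistentC_iff.1 hcons)

theorem exists_dAccepts_of_nAccepts (hPC : ∀ c ∈ ψb.constraints, OnlyPC c) (hsafe : SafeLB ψb)
    {u : List (Sym V sortOf)} (hsig : ∀ ς ∈ u, InSigma ψb.constraints ς)
    (hcons : ConsistentL u τ) (hacc : NAccepts ψb u) :
    ∃ w : List (Set (Constraint V sortOf)), ConsistentC w τ ∧ DAccepts ψb w := by
  obtain ⟨qf, hrun, hfinal⟩ := hacc
  obtain ⟨w, P, hdrun, hqf, hw⟩ := hrun.exists_dSteps hPC hsafe (Set.mem_singleton _)
    ((List.forall₂_and_left _ _).2 ⟨hsig, consistentL_iff.1 hcons⟩)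
  exact ⟨w, consistentC_iff.2 hw, P, hdrun, dFinal_iff.2 ⟨qf, hqf, hfinal⟩⟩

end Acceptance

theorem dfa_iff_nfa_consistent_acceptance_general
    {V : Type} {sortOf : V → VSort}
    (ψ : Formula V sortOf) (h1 : LookaheadLe ψ 1)
    (τ : Trace V sortOf) (hτ : τ ≠ []) :
    (∃ w : List (Set (Constraint V sortOf)),
        ConsistentC w τ ∧ DAccepts (backF ψ) w) ↔
    (∃ u : List (Sym V sortOf), WellFormedW u ∧
        (∀ ς ∈ u, InSigma (Formula.constraints (backF ψ)) ς) ∧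
        ConsistentL u τ ∧ NAccepts (backF ψ) u) :=
  ⟨fun ⟨_, hcons, hacc⟩ => exists_nAccepts_of_dAccepts hτ hcons hacc,
    fun ⟨_, _, hsig, hcons, hacc⟩ =>
      exists_dAccepts_of_nAccepts (backF_onlyPC h1) (backF_safeLB ψ) hsig hcons hacc⟩

/-- the DFA `D_{ψ_back}` accepts a word consistent with `τ` iff
the NFA `N_{ψ_back}` accepts a word consistent with `τ`. -/
theorem dfa_iff_nfa_consistent_acceptance
    {V : Type} [Fintype V] [Nonempty V] {sortOf : V → VSort}
    (ψ : Formula V sortOf) (hψ : IsL ψ) (h1 : LookaheadLe ψ 1)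
    (τ : Trace V sortOf) (hτ : τ ≠ []) :
    (∃ w : List (Set (Constraint V sortOf)),
        ConsistentC w τ ∧ DAccepts (backF ψ) w) ↔
    (∃ u : List (Sym V sortOf), WellFormedW u ∧
        (∀ ς ∈ u, InSigma (Formula.constraints (backF ψ)) ς) ∧
        ConsistentL u τ ∧ NAccepts (backF ψ) u) :=
  dfa_iff_nfa_consistent_acceptance_general ψ h1 τ hτ

end ALTLf
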